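/- arXiv:2101.06520 — 4 statements merged into one kernel-verified Lean document; each statement's English description precedes it below -/
import Mathlib

section
/- Let Y be a topological semigroup and X a subsemigroup of Y. Suppose X admits a continuous semigroup homomorphism h : X → E to a chain-finite semilattice E endowed with the discrete topology such that for every e ∈ E the fiber h⁻¹(e) is closed in Y. Then X is closed in Y. -/
open Topology Filter Set


/-- `spow x n` denotes the power `x^(n+1)` in a semigroup (so exponents `n ≥ 1` are
the values `spow x (n-1)`). -/
def spow {S : Type*} [Semigroup S] (x : S) : ℕ → S
  | 0 => x
  | n + 1 => spow x n * x

/-- The `H`-class of `a` in a semigroup `S`: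
`H_a = {x ∈ S | xS¹ = aS¹ ∧ S¹x = S¹a}`, computed in `S¹ = WithOne S`. -/
def HClass {S : Type*} [Semigroup S] (a : S) : Set S :=
  {x | {y : WithOne S | ∃ s : WithOne S, y = (x : WithOne S) * s} =
         {y : WithOne S | ∃ s : WithOne S, y = (a : WithOne S) * s} ∧
       {y : WithOne S | ∃ s : WithOne S, y = s * (x : WithOne S)} =
         {y : WithOne S | ∃ s : WithOne S, y = s * (a : WithOne S)}}

/-- The center `Z(S)` of a semigroup. -/
def centerSet (S : Type*) [Semigroup S] : Set S := {z : S | ∀ x : S, z * x = x * z}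

/-- The Clifford part `H(S)`: the union of all `H`-classes of idempotents
(equivalently, of all maximal subgroups). -/
def CliffordPart (S : Type*) [Semigroup S] : Set S :=
  {x : S | ∃ e : S, IsIdempotentElem e ∧ x ∈ HClass e}

/-- A semigroup is chain-finite if it contains no infinite chain, where a chain
is a set `C` with `x * y ∈ {x, y}` for all `x, y ∈ C`. -/
def ChainFinite (S : Type*) [Semigroup S] : Prop :=
  ∀ C : Set S, (∀ x ∈ C, ∀ y ∈ C, x * y = x ∨ x * y = y) → C.Finite

/-- A semigroup is periodic if every element has an idempotent power `x^n`, `n ≥ 1`. -/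
def IsPeriodicSemigroup (S : Type*) [Semigroup S] : Prop :=
  ∀ x : S, ∃ n : ℕ, IsIdempotentElem (spow x n)

/-- The maximal subgroup `H_e` of an idempotent `e` is bounded: some power `n ≥ 1`
of every element equals `e`. -/
def BoundedHClass {S : Type*} [Semigroup S] (e : S) : Prop :=
  ∃ n : ℕ, ∀ x ∈ HClass e, spow x n = e

/-- A semigroup `X` is `T₁S`-closed if for every topological semigroup `Y`
satisfying the `T₁` separation axiom and every injective homomorphism `h : X → Y`
with discrete image, the image of `h` is closed in `Y`. -/
def IsT1SClosed (X : Type*) [Semigroup X] : Prop :=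
  ∀ (Y : Type*) [Semigroup Y] [TopologicalSpace Y] [ContinuousMul Y] [T1Space Y],
    ∀ h : X →ₙ* Y, Function.Injective h → DiscreteTopology (Set.range h) →
      IsClosed (Set.range h)

/-- A semigroup `X` is `TzS`-closed if for every Hausdorff zero-dimensional
topological semigroup `Y` (i.e. the clopen sets form a base of the topology) and
every injective homomorphism `h : X → Y` with discrete image, the image of `h`
is closed in `Y`. -/
def IsTzSClosed (X : Type*) [Semigroup X] : Prop :=
  ∀ (Y : Type*) [Semigroup Y] [TopologicalSpace Y] [ContinuousMul Y] [T2Space Y],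
    TopologicalSpace.IsTopologicalBasis {s : Set Y | IsClopen s} →
    ∀ h : X →ₙ* Y, Function.Injective h → DiscreteTopology (Set.range h) →
      IsClosed (Set.range h)

lemma exists_no_rel {E : Type*} [CommSemigroup E]
    (hsl : ∀ e : E, IsIdempotentElem e) (hcf : ChainFinite E)
    (r : E → E → Prop)
    (hmul : ∀ a b : E, r a b → a * b = a ∨ a * b = b)
    (hne : ∀ a b : E, r a b → a ≠ b)
    (htr : ∀ a b c : E, r a b → r b c → r a c)
    (S : Set E) (hS : S.Nonempty) : ∃ a ∈ S, ∀ b ∈ S, ¬ r a b := by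
  by_contra hno
  push_neg at hno
  obtain ⟨a₀, ha₀⟩ := hS
  have step : ∀ p : {a // a ∈ S}, ∃ q : {a // a ∈ S}, r p.1 q.1 := by
    rintro ⟨a, ha⟩
    obtain ⟨b, hb, hr⟩ := hno a ha
    exact ⟨⟨b, hb⟩, hr⟩
  choose f hf using step
  set g : ℕ → {a // a ∈ S} := fun n => f^[n] ⟨a₀, ha₀⟩ with hg
  have hgs : ∀ n, g (n + 1) = f (g n) := fun n => Function.iterate_succ_apply' f n _
  have hmono : ∀ i j, i < j → r (g i).1 (g j).1 := by
    intro i j hij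
    induction j with
    | zero => omega
    | succ j ih =>
      rcases Nat.lt_succ_iff_lt_or_eq.mp hij with hlt | heq
      · exact htr _ _ _ (ih hlt) (by rw [hgs j]; exact hf (g j))
      · subst heq; rw [hgs i]; exact hf (g i)
  have hinj : Function.Injective fun n => (g n).1 := by
    intro i j hij
    by_contra hne'
    rcases lt_or_gt_of_ne hne' with hlt | hlt
    · exact hne _ _ (hmono i j hlt) hij
    · exact hne _ _ (hmono j i hlt) hij.symm
  have hchain : ∀ x ∈ Set.range fun n => (g n).1, ∀ y ∈ Set.range fun n => (g n).1,
      x * y = x ∨ x * y = y := by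
    rintro x ⟨i, rfl⟩ y ⟨j, rfl⟩
    rcases lt_trichotomy i j with hlt | heq | hlt
    · exact hmul _ _ (hmono i j hlt)
    · subst heq; exact Or.inl (hsl _)
    · rcases hmul _ _ (hmono j i hlt) with hh | hh
      · exact Or.inr (by rw [mul_comm]; exact hh)
      · exact Or.inl (by rw [mul_comm]; exact hh)
  exact (Set.infinite_of_injective_forall_mem hinj fun n => Set.mem_range_self n)
    (hcf _ hchain)

theorem statement1 {Y E : Type*} [Semigroup Y] [TopologicalSpace Y] [ContinuousMul Y]
    [CommSemigroup E] [TopologicalSpace E] [DiscreteTopology E]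
    (hsl : ∀ e : E, IsIdempotentElem e)
    (hcf : ChainFinite E)
    (X : Subsemigroup Y)
    (h : X →ₙ* E) (hcont : Continuous h)
    (hfib : ∀ e : E, IsClosed (Subtype.val '' {x : X | h x = e} : Set Y)) :
    IsClosed (X : Set Y) := by
  classical
  by_contra hop
  have hns : ¬ closure (X : Set Y) ⊆ (X : Set Y) := fun hsub =>
    hop (isClosed_of_closure_subset hsub)
  obtain ⟨y, hycl, hyX⟩ := Set.not_subset.mp hns
  obtain ⟨x₀, hx₀⟩ : ∃ x, x ∈ (X : Set Y) := closure_nonempty_iff.mp ⟨y, hycl⟩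
  set hh : Y → E := fun u => if hu : u ∈ X then h ⟨u, hu⟩ else h ⟨x₀, hx₀⟩ with hhdef
  have hhspec : ∀ (u : Y) (hu : u ∈ X), hh u = h ⟨u, hu⟩ := fun u hu => dif_pos hu
  have idem : ∀ c : E, c * c = c := fun c => hsl c
  have hhmul : ∀ u v : Y, u ∈ X → v ∈ X → hh (u * v) = hh u * hh v := by
    intro u v hu hv
    have huv : u * v ∈ X := mul_mem hu hv
    rw [hhspec u hu, hhspec v hv, hhspec _ huv, ← map_mul]
    rfl
  -- order relations
  have lttr : ∀ a b c : E, (a * b = a ∧ a ≠ b) → (b * c = b ∧ b ≠ c) →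
      (a * c = a ∧ a ≠ c) := by
    rintro a b c ⟨h1, h1n⟩ ⟨h2, h2n⟩
    constructor
    · calc a * c = (a * b) * c := by rw [h1]
        _ = a * (b * c) := mul_assoc _ _ _
        _ = a * b := by rw [h2]
        _ = a := h1
    · intro hac
      apply h1n
      have hba : b * a = b := by rw [hac]; exact h2
      calc a = a * b := h1.symm
        _ = b * a := mul_comm _ _
        _ = b := hba
  -- fibers are closed
  set Pf : E → Set Y := fun c => {u : Y | u ∈ X ∧ hh u = c} with hPfdef
  have hPfX : ∀ c, Pf c ⊆ (X : Set Y) := fun c u hu => hu.1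
  have hPfcl : ∀ c, IsClosed (Pf c) := by
    intro c
    have heq : (Subtype.val '' {x : ↥X | h x = c} : Set Y) = Pf c := by
      ext u
      constructor
      · rintro ⟨v, hvc, rfl⟩
        exact ⟨v.2, by rw [hhspec _ v.2, Subtype.coe_eta]; exact hvc⟩
      · rintro ⟨hu, hc⟩
        exact ⟨⟨u, hu⟩, by rwa [hhspec u hu] at hc, rfl⟩
    rw [← heq]; exact hfib c
  -- continuity of h at points of X, packaged
  have hcontV : ∀ (q : Y), q ∈ X → ∃ V ∈ 𝓝 q,
      ∀ (u : Y), u ∈ X → u ∈ V → hh u = hh q := by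
    intro q hq
    have h2 : ({h ⟨q, hq⟩} : Set E) ∈ 𝓝 (h (⟨q, hq⟩ : ↥X)) :=
      (isOpen_discrete _).mem_nhds rfl
    have h3 : (⇑h) ⁻¹' {h ⟨q, hq⟩} ∈ 𝓝 (⟨q, hq⟩ : ↥X) := hcont.continuousAt h2
    rw [nhds_subtype, Filter.mem_comap] at h3
    obtain ⟨V, hV, hVsub⟩ := h3
    refine ⟨V, hV, ?_⟩
    intro u hu huV
    have : (⟨u, hu⟩ : ↥X) ∈ Subtype.val ⁻¹' V := huV
    have := hVsub this
    rw [hhspec u hu, hhspec q hq]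
    exact this
  -- minimum of the image of h
  have hm₀ : ∃ m₀ : E, ∀ u : Y, u ∈ X → m₀ * hh u = m₀ := by
    have hS : (hh '' (X : Set Y)).Nonempty := ⟨hh x₀, x₀, hx₀, rfl⟩
    obtain ⟨m₀, hm₀S, hmin⟩ := exists_no_rel hsl hcf (fun a b => b * a = b ∧ b ≠ a)
      (fun a b hr => Or.inr (by rw [mul_comm]; exact hr.1))
      (fun a b hr => hr.2.symm)
      (fun a b c h1 h2 => by
      obtain ⟨h1e, h1n⟩ := h1
      obtain ⟨h2e, h2n⟩ := h2
      refine ⟨?_, ?_⟩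
      · calc c * a = (c * b) * a := by rw [h2e]
          _ = c * (b * a) := mul_assoc _ _ _
          _ = c * b := by rw [h1e]
          _ = c := h2e
      · intro hca
        apply h2n
        have hba : b * c = b := by rw [hca]; exact h1e
        calc c = c * b := h2e.symm
          _ = b * c := mul_comm _ _
          _ = b := hba)
      (hh '' (X : Set Y)) hS
    refine ⟨m₀, ?_⟩
    intro u hu
    obtain ⟨u₀, hu₀X, hu₀⟩ := hm₀S
    have hb : (m₀ * hh u) ∈ hh '' (X : Set Y) := by
      refine ⟨u₀ * u, mul_mem hu₀X hu, ?_⟩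
      rw [hhmul _ _ hu₀X hu, hu₀]
    have hle : (m₀ * hh u) * m₀ = m₀ * hh u := by
      calc (m₀ * hh u) * m₀ = (hh u * m₀) * m₀ := by rw [mul_comm m₀ (hh u)]
        _ = hh u * (m₀ * m₀) := mul_assoc _ _ _
        _ = hh u * m₀ := by rw [idem]
        _ = m₀ * hh u := mul_comm _ _
    have := hmin _ hb
    by_contra hne'
    exact this ⟨hle, fun hc => hne' hc⟩
  obtain ⟨m₀, hm₀⟩ := hm₀
  -- no ultrafilter converging to a ghost point contains a fiber
  have gnf : ∀ (w : Y) (W : Ultrafilter Y), (W : Filter Y) ≤ 𝓝 w → w ∉ X →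
      ∀ c, Pf c ∉ W := by
    intro w W hle hw c hc
    have hwcl : w ∈ closure (Pf c) := by
      rw [mem_closure_iff_nhds]
      intro t ht
      exact Filter.nonempty_of_mem (Filter.inter_mem (hle ht) hc)
    rw [(hPfcl c).closure_eq] at hwcl
    exact hw (hPfX c hwcl)
  -- THE KEY STEP LEMMA
  have key : ∀ (w : Y) (W : Ultrafilter Y), (W : Filter Y) ≤ 𝓝 w →
      (X : Set Y) ∈ W → w ∉ X → ∀ T ∈ W, T ⊆ (X : Set Y) →
      ∃ (a' : E) (w' : Y) (W' : Ultrafilter Y),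
        ((W' : Filter Y) ≤ 𝓝 w' ∧ (X : Set Y) ∈ W' ∧ w' ∉ X) ∧
        {u : Y | u ∈ X ∧ hh u * a' = hh u ∧ hh u ≠ a'} ∈ W' ∧
        ∃ t ∈ T, hh t = a' := by
    intro w W hWn hWX hwX T hT hTX
    set M : Set E := {c | {u : Y | u ∈ X ∧ c * hh u = c} ∈ W} with hMdef
    have hm₀M : m₀ ∈ M := by
      have hsub : (X : Set Y) ⊆ {u : Y | u ∈ X ∧ m₀ * hh u = m₀} :=
        fun u hu => ⟨hu, hm₀ u hu⟩
      exact Filter.mem_of_superset hWX hsub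
    obtain ⟨e, heM, hemax⟩ := exists_no_rel hsl hcf (fun a b => a * b = a ∧ a ≠ b)
      (fun a b hr => Or.inl hr.1) (fun a b hr => hr.2) lttr M ⟨m₀, hm₀M⟩
    have hHs : {u : Y | u ∈ X ∧ e * hh u = e ∧ hh u ≠ e} ∈ W := by
      have h1 : {u : Y | u ∈ X ∧ e * hh u = e} ∈ W := heM
      have h2 : (Pf e)ᶜ ∈ W :=
        (Ultrafilter.compl_mem_iff_notMem).mpr (gnf w W hWn hwX e)
      refine Filter.mem_of_superset (Filter.inter_mem h1 h2) ?_
      rintro u ⟨⟨hu, hle⟩, hnu⟩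
      exact ⟨hu, hle, fun hc => hnu ⟨hu, hc⟩⟩
    -- Case I is impossible
    have caseI : {u : Y | u ∈ X ∧ u * w ∈ X} ∉ W := by
      intro hA
      have claim1 : ∀ u₁ : Y, u₁ ∈ X → e * hh u₁ = e → hh u₁ ≠ e → u₁ * w ∈ X →
          ∃ Ts ∈ W, ∀ u₂ ∈ Ts, u₂ ∈ X ∧ hh u₁ * hh u₂ = e := by
        intro u₁ hu₁X hu₁le hu₁ne hqX
        obtain ⟨V, hV, hVspec⟩ := hcontV (u₁ * w) hqX
        set c₀ := hh (u₁ * w) with hc₀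
        have hpre : (fun u => u₁ * u) ⁻¹' V ∈ W := by
          have htd : Filter.Tendsto (fun u => u₁ * u) (W : Filter Y) (𝓝 (u₁ * w)) :=
            ((continuous_const.mul continuous_id).tendsto w).mono_left hWn
          exact htd hV
        have hTs : ({u : Y | u ∈ X ∧ e * hh u = e ∧ hh u ≠ e} ∩
            (fun u => u₁ * u) ⁻¹' V) ∈ W := Filter.inter_mem hHs hpre
        have hval : ∀ u₂ : Y, u₂ ∈ ({u : Y | u ∈ X ∧ e * hh u = e ∧ hh u ≠ e} ∩
            (fun u => u₁ * u) ⁻¹' V) → hh u₁ * hh u₂ = c₀ := by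
          rintro u₂ ⟨⟨hu₂X, _, _⟩, hu₂V⟩
          have hm : u₁ * u₂ ∈ X := mul_mem hu₁X hu₂X
          have := hVspec (u₁ * u₂) hm hu₂V
          rw [hhmul _ _ hu₁X hu₂X] at this
          exact this
        have hc₀M : c₀ ∈ M := by
          refine Filter.mem_of_superset hTs ?_
          rintro u₂ hu₂
          have h12 := hval u₂ hu₂
          obtain ⟨⟨hu₂X, _, _⟩, _⟩ := hu₂
          refine ⟨hu₂X, ?_⟩
          calc c₀ * hh u₂ = (hh u₁ * hh u₂) * hh u₂ := by rw [h12]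
            _ = hh u₁ * (hh u₂ * hh u₂) := mul_assoc _ _ _
            _ = hh u₁ * hh u₂ := by rw [idem]
            _ = c₀ := h12
        have hec₀ : e * c₀ = e := by
          obtain ⟨u₂, hu₂⟩ := Filter.nonempty_of_mem hTs
          have h12 := hval u₂ hu₂
          obtain ⟨⟨hu₂X, hu₂e, _⟩, _⟩ := hu₂
          calc e * c₀ = e * (hh u₁ * hh u₂) := by rw [h12]
            _ = (e * hh u₁) * hh u₂ := (mul_assoc _ _ _).symm
            _ = e * hh u₂ := by rw [hu₁le]
            _ = e := hu₂e
        have hc₀e : c₀ = e := by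
          by_contra hne'
          exact hemax c₀ hc₀M ⟨hec₀, fun hce => hne' hce.symm⟩
        refine ⟨_, hTs, ?_⟩
        intro u₂ hu₂
        refine ⟨hu₂.1.1, ?_⟩
        rw [hval u₂ hu₂, hc₀e]
      -- w * w lies in the fiber of e
      have claim2 : w * w ∈ Pf e := by
        have hcl : w * w ∈ closure (Pf e) := by
          rw [mem_closure_iff_nhds]
          intro t ht
          have hmc : Filter.Tendsto (fun p : Y × Y => p.1 * p.2) (𝓝 (w, w))
              (𝓝 (w * w)) := continuous_mul.tendsto (w, w)
          have hpre2 : {p : Y × Y | p.1 * p.2 ∈ t} ∈ 𝓝 (w, w) := hmc ht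
          rw [mem_nhds_prod_iff] at hpre2
          obtain ⟨U₁, hU₁, U₂, hU₂, hsub⟩ := hpre2
          obtain ⟨u₁, hu₁⟩ := Filter.nonempty_of_mem
            (Filter.inter_mem (hWn hU₁)
              (Filter.inter_mem hHs hA))
          obtain ⟨hu₁U, ⟨hu₁X, hu₁le, hu₁ne⟩, hu₁A⟩ := hu₁
          obtain ⟨Ts, hTsW, hTspec⟩ := claim1 u₁ hu₁X hu₁le hu₁ne hu₁A.2
          obtain ⟨u₂, hu₂U, hu₂Ts⟩ := Filter.nonempty_of_mem
            (Filter.inter_mem (hWn hU₂) hTsW)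
          obtain ⟨hu₂X, hvl⟩ := hTspec u₂ hu₂Ts
          refine ⟨u₁ * u₂, ?_, ?_⟩
          · exact hsub (Set.mk_mem_prod hu₁U hu₂U)
          · exact ⟨mul_mem hu₁X hu₂X, by rw [hhmul _ _ hu₁X hu₂X]; exact hvl⟩
        rwa [(hPfcl e).closure_eq] at hcl
      obtain ⟨hwwX, hwwe⟩ := claim2
      -- now h-continuity at w*w forces the fiber of e into W
      obtain ⟨V', hV', hV'spec⟩ := hcontV (w * w) hwwX
      have hmc : Filter.Tendsto (fun p : Y × Y => p.1 * p.2) (𝓝 (w, w))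
          (𝓝 (w * w)) := continuous_mul.tendsto (w, w)
      have hpre2 : {p : Y × Y | p.1 * p.2 ∈ V'} ∈ 𝓝 (w, w) := hmc hV'
      rw [mem_nhds_prod_iff] at hpre2
      obtain ⟨U₁, hU₁, U₂, hU₂, hsub⟩ := hpre2
      have hPfW : Pf e ∈ W := by
        refine Filter.mem_of_superset
          (Filter.inter_mem (Filter.inter_mem (hWn hU₁) (hWn hU₂)) hWX) ?_
        rintro u ⟨⟨hu1, hu2⟩, huX⟩
        have huuV : u * u ∈ V' := hsub (Set.mk_mem_prod hu1 hu2)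
        have huuX : u * u ∈ X := mul_mem huX huX
        have he1 : hh (u * u) = hh (w * w) := hV'spec (u * u) huuX huuV
        rw [hhmul u u huX huX, idem, hwwe] at he1
        exact ⟨huX, he1⟩
      exact gnf w W hWn hwX e hPfW
    -- Case II: pick the multiplier
    have hAc : {u : Y | u ∈ X ∧ u * w ∈ X}ᶜ ∈ W :=
      Ultrafilter.compl_mem_iff_notMem.mpr caseI
    obtain ⟨us, husT, ⟨husX, husle, husne⟩, husA⟩ := Filter.nonempty_of_mem
      (Filter.inter_mem hT (Filter.inter_mem hHs hAc))
    have huswX : us * w ∉ X := fun hc => husA ⟨husX, hc⟩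
    refine ⟨hh us, us * w, W.map (fun u => us * u), ⟨?_, ?_, huswX⟩, ?_, us, husT, rfl⟩
    · have htd : Filter.Tendsto (fun u => us * u) (W : Filter Y) (𝓝 (us * w)) :=
        ((continuous_const.mul continuous_id).tendsto w).mono_left hWn
      rw [Ultrafilter.coe_map]
      exact htd
    · rw [Ultrafilter.mem_map]
      exact Filter.mem_of_superset hWX (fun u hu => mul_mem husX hu)
    · rw [Ultrafilter.mem_map]
      have hQ : {u : Y | u ∈ X ∧ hh us * hh u = hh us} ∉ W := by
        intro hc
        exact hemax (hh us) hc ⟨husle, fun hce => husne hce.symm⟩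
      have hQc : {u : Y | u ∈ X ∧ hh us * hh u = hh us}ᶜ ∈ W :=
        Ultrafilter.compl_mem_iff_notMem.mpr hQ
      refine Filter.mem_of_superset (Filter.inter_mem hHs hQc) ?_
      rintro u ⟨⟨huX, hule, hune⟩, huQ⟩
      have hmX : us * u ∈ X := mul_mem husX huX
      have hval : hh (us * u) = hh us * hh u := hhmul _ _ husX huX
      refine ⟨hmX, ?_, ?_⟩
      · rw [hval]
        calc (hh us * hh u) * hh us = (hh u * hh us) * hh us := by
              rw [mul_comm (hh us) (hh u)]
          _ = hh u * (hh us * hh us) := mul_assoc _ _ _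
          _ = hh u * hh us := by rw [idem]
          _ = hh us * hh u := mul_comm _ _
      · rw [hval]
        intro hc
        exact huQ ⟨huX, hc⟩
  -- initial ultrafilter at y
  have hy' : ClusterPt y (Filter.principal (X : Set Y)) :=
    mem_closure_iff_clusterPt.mp hycl
  haveI : (𝓝 y ⊓ Filter.principal (X : Set Y)).NeBot := hy'
  set U₀ := Ultrafilter.of (𝓝 y ⊓ Filter.principal (X : Set Y)) with hU₀def
  have hU₀le : (U₀ : Filter Y) ≤ 𝓝 y ⊓ Filter.principal (X : Set Y) :=
    Ultrafilter.of_le _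
  have hU₀n : (U₀ : Filter Y) ≤ 𝓝 y := hU₀le.trans inf_le_left
  have hU₀X : (X : Set Y) ∈ U₀ :=
    hU₀le (Filter.le_def.mp inf_le_right _ (Filter.mem_principal_self _))
  -- the set of ceilings
  set Λ : Set E := {a | ∃ (w : Y) (W : Ultrafilter Y),
    ((W : Filter Y) ≤ 𝓝 w ∧ (X : Set Y) ∈ W ∧ w ∉ X) ∧
    {u : Y | u ∈ X ∧ hh u * a = hh u ∧ hh u ≠ a} ∈ W} with hΛdef
  have hΛne : Λ.Nonempty := by
    obtain ⟨a', w', W', hg, hc, _⟩ :=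
      key y U₀ hU₀n hU₀X hyX (X : Set Y) hU₀X (subset_refl _)
    exact ⟨a', w', W', hg, hc⟩
  obtain ⟨a, haΛ, hamin⟩ := exists_no_rel hsl hcf (fun x b => b * x = b ∧ b ≠ x)
    (fun x b hr => Or.inr (by rw [mul_comm]; exact hr.1))
    (fun x b hr => hr.2.symm)
    (fun a b c h1 h2 => by
      obtain ⟨h1e, h1n⟩ := h1
      obtain ⟨h2e, h2n⟩ := h2
      refine ⟨?_, ?_⟩
      · calc c * a = (c * b) * a := by rw [h2e]
          _ = c * (b * a) := mul_assoc _ _ _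
          _ = c * b := by rw [h1e]
          _ = c := h2e
      · intro hca
        apply h2n
        have hba : b * c = b := by rw [hca]; exact h1e
        calc c = c * b := h2e.symm
          _ = b * c := mul_comm _ _
          _ = b := hba)
    Λ hΛne
  obtain ⟨w, W, ⟨hWn, hWX, hwX⟩, hceil⟩ := haΛ
  obtain ⟨a', w', W', hg', hc', t, htT, hta⟩ :=
    key w W hWn hWX hwX _ hceil (fun u hu => hu.1)
  have ha'Λ : a' ∈ Λ := ⟨w', W', hg', hc'⟩
  refine hamin a' ha'Λ ⟨?_, ?_⟩
  · rw [← hta]; exact htT.2.1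
  · rw [← hta]; exact htT.2.2
end

section
/- For any idempotent e of a semigroup S, one has (√∞H_e · H_e) ∪ (H_e · √∞H_e) ⊆ H_e; that is, if x ∈ S satisfies x^n ∈ H_e for some n ≥ 1 and y ∈ H_e, then xy ∈ H_e and yx ∈ H_e. -/
section Aux

/-- Green's `H`-relation to `ε`, phrased in a monoid. -/
def Pm {M : Type*} [Monoid M] (ε a : M) : Prop :=
  (∃ s, a = ε * s) ∧ (∃ t, ε = a * t) ∧ (∃ s, a = s * ε) ∧ (∃ t, ε = t * a)

lemma Pm.left_id {M : Type*} [Monoid M] {ε a : M} (hε : ε * ε = ε) (h : Pm ε a) :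
    ε * a = a := by
  obtain ⟨⟨s, hs⟩, -, -, -⟩ := h
  rw [hs, ← mul_assoc, hε]

lemma Pm.right_id {M : Type*} [Monoid M] {ε a : M} (hε : ε * ε = ε) (h : Pm ε a) :
    a * ε = a := by
  obtain ⟨-, -, ⟨s, hs⟩, -⟩ := h
  rw [hs, mul_assoc, hε]

lemma Pm.mul {M : Type*} [Monoid M] {ε a b : M} (hε : ε * ε = ε)
    (ha : Pm ε a) (hb : Pm ε b) : Pm ε (a * b) := by
  obtain ⟨ta, hta⟩ := ha.2.1
  obtain ⟨ua, hua⟩ := ha.2.2.2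
  obtain ⟨tb, htb⟩ := hb.2.1
  obtain ⟨ub, hub⟩ := hb.2.2.2
  refine ⟨⟨a * b, ?_⟩, ⟨tb * ta, ?_⟩, ⟨a * b, ?_⟩, ⟨ub * ua, ?_⟩⟩
  · rw [← mul_assoc, ha.left_id hε]
  · calc ε = a * ta := hta
      _ = (a * ε) * ta := by rw [ha.right_id hε]
      _ = (a * (b * tb)) * ta := by rw [← htb]
      _ = (a * b) * (tb * ta) := by simp only [mul_assoc]
  · rw [mul_assoc, hb.right_id hε]
  · calc ε = ub * b := hub
      _ = ub * (ε * b) := by rw [hb.left_id hε]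
      _ = ub * ((ua * a) * b) := by rw [← hua]
      _ = (ub * ua) * (a * b) := by simp only [mul_assoc]

/-- The key monoid lemma: if `ξ^(n+1)` is `H`-related to the idempotent `ε`, then
`ξ * ε = ε * ξ` and this element is `H`-related to `ε`. -/
lemma key_lemma {M : Type*} [Monoid M] {ε ξ : M} (hε : ε * ε = ε) (n : ℕ)
    (h : Pm ε (ξ ^ (n + 1))) : ξ * ε = ε * ξ ∧ Pm ε (ξ * ε) := by
  have hεζ : ε * ξ ^ (n + 1) = ξ ^ (n + 1) := h.left_id hε
  have hζε : ξ ^ (n + 1) * ε = ξ ^ (n + 1) := h.right_id hε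
  obtain ⟨t, ht⟩ := h.2.1
  obtain ⟨t', ht'⟩ := h.2.2.2
  obtain ⟨ι, hιdef⟩ : ∃ ι : M, ι = ε * t := ⟨ε * t, rfl⟩
  have hζι : ξ ^ (n + 1) * ι = ε := by
    rw [hιdef, ← mul_assoc, hζε, ← ht]
  have hjζ : (t' * ε) * ξ ^ (n + 1) = ε := by
    rw [mul_assoc, hεζ, ← ht']
  have hjε : (t' * ε) * ε = t' * ε := by rw [mul_assoc, hε]
  have hει : ε * ι = ι := by rw [hιdef, ← mul_assoc, hε]
  have hij : t' * ε = ι := by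
    calc t' * ε = (t' * ε) * ε := hjε.symm
      _ = (t' * ε) * (ξ ^ (n + 1) * ι) := by rw [hζι]
      _ = ((t' * ε) * ξ ^ (n + 1)) * ι := by simp only [mul_assoc]
      _ = ε * ι := by rw [hjζ]
      _ = ι := hει
  have hιζ : ι * ξ ^ (n + 1) = ε := by rw [← hij]; exact hjζ
  have hιε : ι * ε = ι := by rw [← hij]; exact hjε
  -- power decompositions
  have hsplit : ξ ^ (2 * n + 2) = ξ ^ (n + 1) * ξ ^ (n + 1) := by
    rw [← pow_add]; congr 1; ring
  have hsucc1 : ξ * ξ ^ (n + 1) = ξ ^ (n + 2) := (pow_succ' ξ (n + 1)).symm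
  have hsucc2 : ξ ^ (n + 1) * ξ = ξ ^ (n + 2) := (pow_succ ξ (n + 1)).symm
  have hA1 : ι * ξ ^ (2 * n + 2) = ξ ^ (n + 1) := by
    rw [hsplit, ← mul_assoc, hιζ, hεζ]
  have hA2 : ξ ^ (2 * n + 2) * ι = ξ ^ (n + 1) := by
    rw [hsplit, mul_assoc, hζι, hζε]
  have hnum : 2 * n + 3 = (2 * n + 2) + 1 := by omega
  have h23a : ξ ^ (2 * n + 3) = ξ ^ (2 * n + 2) * ξ := by rw [hnum, pow_succ]
  have h23b : ξ ^ (2 * n + 3) = ξ * ξ ^ (2 * n + 2) := by rw [hnum, pow_succ']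
  have hB1 : ι * ξ ^ (2 * n + 3) = ξ ^ (n + 2) := by
    rw [h23a, ← mul_assoc, hA1, hsucc2]
  have hB2 : ξ ^ (2 * n + 3) * ι = ξ ^ (n + 2) := by
    rw [h23b, mul_assoc, hA2, hsucc1]
  have hxe : ξ * ε = ξ ^ (n + 2) * ι := by
    rw [← hζι, ← mul_assoc, hsucc1]
  have hex : ε * ξ = ι * ξ ^ (n + 2) := by
    rw [← hιζ, mul_assoc, hsucc2]
  have hcomm : ξ * ε = ε * ξ := by
    calc ξ * ε = ξ ^ (n + 2) * ι := hxe
      _ = (ι * ξ ^ (2 * n + 3)) * ι := by rw [hB1]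
      _ = ι * (ξ ^ (2 * n + 3) * ι) := by rw [mul_assoc]
      _ = ι * ξ ^ (n + 2) := by rw [hB2]
      _ = ε * ξ := hex.symm
  refine ⟨hcomm, ⟨ξ * ε, ?_⟩, ⟨ξ ^ (2 * n + 1) * (ι * ι), ?_⟩,
    ⟨ξ * ε, ?_⟩, ⟨(ι * ι) * ξ ^ (2 * n + 1), ?_⟩⟩
  · -- ξ * ε = ε * (ξ * ε)
    calc ξ * ε = (ξ * ε) * ε := by rw [mul_assoc, hε]
      _ = (ε * ξ) * ε := by rw [hcomm]
      _ = ε * (ξ * ε) := by rw [mul_assoc]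
  · -- ε = (ξ * ε) * (ξ ^ (2n+1) * (ι * ι))
    have hodd : ε * ξ ^ (2 * n + 1) = ξ ^ (2 * n + 1) := by
      have hs : ξ ^ (2 * n + 1) = ξ ^ (n + 1) * ξ ^ n := by
        rw [← pow_add]; congr 1; ring
      rw [hs, ← mul_assoc, hεζ]
    have hstep : (ξ * ε) * ξ ^ (2 * n + 1) = ξ ^ (2 * n + 2) := by
      rw [mul_assoc, hodd, ← pow_succ']
    calc ε = ξ ^ (n + 1) * ι := hζι.symm
      _ = (ξ ^ (2 * n + 2) * ι) * ι := by rw [hA2]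
      _ = ξ ^ (2 * n + 2) * (ι * ι) := by simp only [mul_assoc]
      _ = ((ξ * ε) * ξ ^ (2 * n + 1)) * (ι * ι) := by rw [hstep]
      _ = (ξ * ε) * (ξ ^ (2 * n + 1) * (ι * ι)) := by rw [mul_assoc]
  · -- ξ * ε = (ξ * ε) * ε
    rw [mul_assoc, hε]
  · -- ε = ((ι * ι) * ξ ^ (2n+1)) * (ξ * ε)
    have hstep : ξ ^ (2 * n + 1) * (ξ * ε) = ξ ^ (2 * n + 2) := by
      rw [← mul_assoc, ← pow_succ, hsplit, mul_assoc, hζε, ← hsplit]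
    calc ε = ι * ξ ^ (n + 1) := hιζ.symm
      _ = ι * (ι * ξ ^ (2 * n + 2)) := by rw [hA1]
      _ = (ι * ι) * ξ ^ (2 * n + 2) := by simp only [mul_assoc]
      _ = (ι * ι) * (ξ ^ (2 * n + 1) * (ξ * ε)) := by rw [hstep]
      _ = ((ι * ι) * ξ ^ (2 * n + 1)) * (ξ * ε) := by simp only [mul_assoc]

lemma mem_hclass_iff {S : Type*} [Semigroup S] (e a : S) :
    a ∈ HClass e ↔ Pm (e : WithOne S) (a : WithOne S) := by
  constructor
  · rintro ⟨h1, h2⟩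
    have ha1 : (a : WithOne S) ∈ {y : WithOne S | ∃ s, y = (a : WithOne S) * s} :=
      ⟨1, (mul_one _).symm⟩
    have he1 : (e : WithOne S) ∈ {y : WithOne S | ∃ s, y = (e : WithOne S) * s} :=
      ⟨1, (mul_one _).symm⟩
    have ha2 : (a : WithOne S) ∈ {y : WithOne S | ∃ s, y = s * (a : WithOne S)} :=
      ⟨1, (one_mul _).symm⟩
    have he2 : (e : WithOne S) ∈ {y : WithOne S | ∃ s, y = s * (e : WithOne S)} :=
      ⟨1, (one_mul _).symm⟩
    rw [h1] at ha1
    rw [← h1] at he1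
    rw [h2] at ha2
    rw [← h2] at he2
    exact ⟨ha1, he1, ha2, he2⟩
  · rintro ⟨⟨s1, hs1⟩, ⟨t1, ht1⟩, ⟨s2, hs2⟩, ⟨t2, ht2⟩⟩
    constructor
    · ext z
      simp only [Set.mem_setOf_eq]
      constructor
      · rintro ⟨u, hu⟩
        exact ⟨s1 * u, by rw [hu, hs1, mul_assoc]⟩
      · rintro ⟨u, hu⟩
        exact ⟨t1 * u, by rw [hu, ht1, mul_assoc]⟩
    · ext z
      simp only [Set.mem_setOf_eq]
      constructor
      · rintro ⟨u, hu⟩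
        exact ⟨u * s2, by rw [hu, hs2, mul_assoc]⟩
      · rintro ⟨u, hu⟩
        exact ⟨u * t2, by rw [hu, ht2, mul_assoc]⟩

lemma spow_cast {S : Type*} [Semigroup S] (x : S) (n : ℕ) :
    ((spow x n : S) : WithOne S) = (x : WithOne S) ^ (n + 1) := by
  induction n with
  | zero => simp [spow]
  | succ k ih => rw [spow, WithOne.coe_mul, ih, ← pow_succ]

end Aux

theorem statement7 {S : Type*} [Semigroup S] (e : S) (he : IsIdempotentElem e)
    (x y : S) (hx : ∃ n : ℕ, spow x n ∈ HClass e) (hy : y ∈ HClass e) :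
    x * y ∈ HClass e ∧ y * x ∈ HClass e := by
  obtain ⟨n, hz⟩ := hx
  rw [mem_hclass_iff] at hz hy
  rw [spow_cast] at hz
  have hε : (e : WithOne S) * (e : WithOne S) = (e : WithOne S) := by
    rw [← WithOne.coe_mul, he]
  obtain ⟨hcomm, hPg⟩ := key_lemma hε n hz
  constructor
  · rw [mem_hclass_iff, WithOne.coe_mul]
    have hrw : (x : WithOne S) * (y : WithOne S) =
        ((x : WithOne S) * (e : WithOne S)) * (y : WithOne S) := by
      rw [mul_assoc, hy.left_id hε]
    rw [hrw]
    exact Pm.mul hε hPg hy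
  · rw [mem_hclass_iff, WithOne.coe_mul]
    have hrw : (y : WithOne S) * (x : WithOne S) =
        (y : WithOne S) * ((x : WithOne S) * (e : WithOne S)) := by
      rw [hcomm, ← mul_assoc, hy.right_id hε]
    rw [hrw]
    exact Pm.mul hε hy hPg
end

section
/- Let S be a periodic semigroup whose idempotents all lie in the center Z(S). Then: (a) for every x ∈ S the monogenic semigroup {x^n : n ≥ 1} contains a unique idempotent π(x); (b) the map π : S → E(S) is a semigroup homomorphism, i.e., π(xy) = π(x)π(y) for all x,y ∈ S; (c) the Clifford part H(S) is a subsemigroup of S, and in fact H_x · H_y ⊆ H_{xy} for all idempotents x,y ∈ E(S). -/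
/-!
Everything is computed in the monoid `S¹`, where `x^(n+1)` is `spow x n`. Let `e`, `f`, `g` be
the idempotent powers of `x`, `y` and `xy`. Since `g = (xy)^(k+1)` is central, a factorisation
`a * b = g` gives `a^j * b^j = g` for all `j ≥ 1`; applied to `x * (y (xy)^k) = g` and to
`((xy)^k x) * y = g` it yields `e g = g` and `g f = g`. Conversely `x * x^m = e` and `y * y^n = f`
make `xy * (y^n x^m) = ef`, whence `g (ef) = ef`. So `g = g e f = e f`.

For the `H`-classes, `a ∈ H_x` means that `a` and `x` divide each other on both sides in `S¹`;
when `x` and `y` are central the witnesses for `a, x` and `b, y` combine into witnesses for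
`ab, xy`.
-/

section Monoid

variable {M : Type*} [Monoid M]

theorem pow_succ_eq_pow_succ_of_isIdempotentElem {x : M} {m n : ℕ}
    (hm : IsIdempotentElem (x ^ (m + 1))) (hn : IsIdempotentElem (x ^ (n + 1))) :
    x ^ (m + 1) = x ^ (n + 1) := by
  rw [← hm.pow_succ_eq n, ← pow_mul, mul_comm, pow_mul, hn.pow_succ_eq m]

theorem IsMulCentral.pow_succ_mul_pow_succ_eq {g a b : M} (hgc : IsMulCentral g)
    (hg : IsIdempotentElem g) (hab : a * b = g) (n : ℕ) : a ^ (n + 1) * b ^ (n + 1) = g := by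
  induction n with
  | zero => simpa using hab
  | succ n ih =>
    calc a ^ (n + 1 + 1) * b ^ (n + 1 + 1) = a ^ (n + 1) * (a * b) * b ^ (n + 1) := by
          rw [pow_succ a (n + 1), pow_succ' b (n + 1)]
          simp only [mul_assoc]
      _ = g * (a ^ (n + 1) * b ^ (n + 1)) := by rw [hab, ← (hgc.comm _).eq, mul_assoc]
      _ = g := by rw [ih, hg.eq]

theorem eq_mul_of_pow_succ_eq {x y e f g : M} {m n k : ℕ}
    (hec : IsMulCentral e) (hfc : IsMulCentral f) (hgc : IsMulCentral g)
    (he : IsIdempotentElem e) (hf : IsIdempotentElem f) (hg : IsIdempotentElem g)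
    (hxe : x ^ (m + 1) = e) (hyf : y ^ (n + 1) = f) (hxyg : (x * y) ^ (k + 1) = g) :
    g = e * f := by
  have heg : e * g = g := by
    have hxr : x ^ (m + 1) * (y * (x * y) ^ k) ^ (m + 1) = g :=
      hgc.pow_succ_mul_pow_succ_eq hg (by rw [← mul_assoc, ← pow_succ', hxyg]) m
    rw [← hxr, hxe, he.mul_self_mul]
  have hgf : g * f = g := by
    have hly : ((x * y) ^ k * x) ^ (n + 1) * y ^ (n + 1) = g :=
      hgc.pow_succ_mul_pow_succ_eq hg (by rw [mul_assoc, ← pow_succ, hxyg]) n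
    rw [← hly, hyf, hf.mul_mul_self]
  have hghh : g * (e * f) = e * f := by
    have hxy : x * y * (y ^ n * x ^ m) = e * f := by
      calc x * y * (y ^ n * x ^ m) = x * (y ^ (n + 1) * x ^ m) := by
            rw [pow_succ']
            simp only [mul_assoc]
        _ = f * (x * x ^ m) := by rw [hyf, ← mul_assoc, ← (hfc.comm x).eq, mul_assoc]
        _ = e * f := by rw [← pow_succ', hxe, (hfc.comm e).eq]
    have hhc : IsMulCentral (e * f) := Set.mul_mem_center (z₁ := e) hec hfc
    have hxys : (x * y) ^ (k + 1) * (y ^ n * x ^ m) ^ (k + 1) = e * f :=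
      hhc.pow_succ_mul_pow_succ_eq (he.mul_of_commute (hec.comm f) hf) hxy k
    rw [← hxys, hxyg, ← mul_assoc, hg.eq]
  calc g = g * (e * f) := by rw [← mul_assoc, ← (hec.comm g).eq, heg, hgf]
    _ = e * f := hghh

theorem setOf_exists_mul_eq_iff {a b : M} :
    {y | ∃ s, y = a * s} = {y | ∃ s, y = b * s} ↔ b ∣ a ∧ a ∣ b := by
  refine ⟨fun h => ⟨h.subset ⟨1, (mul_one a).symm⟩, h.symm.subset ⟨1, (mul_one b).symm⟩⟩,
    fun ⟨hba, hab⟩ => Set.ext fun _ => ⟨hba.trans, hab.trans⟩⟩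

theorem setOf_exists_mul_eq_iff' {a b : M} :
    {y | ∃ s, y = s * a} = {y | ∃ s, y = s * b} ↔ (∃ s, a = s * b) ∧ ∃ s, b = s * a := by
  refine ⟨fun h => ⟨h.subset ⟨1, (one_mul a).symm⟩, h.symm.subset ⟨1, (one_mul b).symm⟩⟩,
    fun ⟨⟨t, ht⟩, ⟨u, hu⟩⟩ => Set.ext fun _ => ⟨?_, ?_⟩⟩
  · rintro ⟨s, rfl⟩
    exact ⟨s * t, by rw [ht, mul_assoc]⟩
  · rintro ⟨s, rfl⟩
    exact ⟨s * u, by rw [hu, mul_assoc]⟩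

end Monoid

section Semigroup

variable {S : Type*} [Semigroup S]

theorem WithOne.coe_spow (x : S) (n : ℕ) :
    ((spow x n : S) : WithOne S) = (x : WithOne S) ^ (n + 1) := by
  induction n with
  | zero => simp [spow]
  | succ n ih => rw [spow, WithOne.coe_mul, ih, ← pow_succ]

theorem WithOne.isMulCentral_coe {z : S} (hz : z ∈ centerSet S) :
    IsMulCentral (z : WithOne S) := by
  rw [← Set.mem_center_iff, Semigroup.mem_center_iff]
  intro w
  induction w using WithOne.recOneCoe with
  | one => rw [one_mul, mul_one]
  | coe s => rw [← WithOne.coe_mul, ← WithOne.coe_mul, hz s]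

theorem spow_eq_spow_of_isIdempotentElem {x : S} {m n : ℕ}
    (hm : IsIdempotentElem (spow x m)) (hn : IsIdempotentElem (spow x n)) :
    spow x m = spow x n := by
  have hm' := hm.map WithOne.coeMulHom
  have hn' := hn.map WithOne.coeMulHom
  simp only [WithOne.coeMulHom_apply, WithOne.coe_spow] at hm' hn'
  exact WithOne.coe_injective <| by
    rw [WithOne.coe_spow, WithOne.coe_spow, pow_succ_eq_pow_succ_of_isIdempotentElem hm' hn']

theorem eq_mul_of_spow_eq {x y e f g : S} {m n k : ℕ}
    (hec : e ∈ centerSet S) (hfc : f ∈ centerSet S) (hgc : g ∈ centerSet S)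
    (he : IsIdempotentElem e) (hf : IsIdempotentElem f) (hg : IsIdempotentElem g)
    (hxe : spow x m = e) (hyf : spow y n = f) (hxyg : spow (x * y) k = g) :
    g = e * f := by
  apply WithOne.coe_injective
  rw [WithOne.coe_mul]
  refine eq_mul_of_pow_succ_eq (WithOne.isMulCentral_coe hec) (WithOne.isMulCentral_coe hfc)
    (WithOne.isMulCentral_coe hgc) (he.map WithOne.coeMulHom) (hf.map WithOne.coeMulHom)
    (hg.map WithOne.coeMulHom) (x := (x : WithOne S)) (y := y) (m := m) (n := n) (k := k)
    ?_ ?_ ?_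
  · rw [← WithOne.coe_spow, hxe]
  · rw [← WithOne.coe_spow, hyf]
  · rw [← WithOne.coe_mul, ← WithOne.coe_spow, hxyg]

theorem mem_HClass_iff {a x : S} :
    a ∈ HClass x ↔ ((x : WithOne S) ∣ a ∧ (a : WithOne S) ∣ x) ∧
      ((∃ s, (a : WithOne S) = s * x) ∧ ∃ s, (x : WithOne S) = s * a) := by
  rw [HClass, Set.mem_ofPred_eq, setOf_exists_mul_eq_iff, setOf_exists_mul_eq_iff']

theorem mul_mem_HClass_mul {x y a b : S} (hx : IsMulCentral (x : WithOne S))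
    (hy : IsMulCentral (y : WithOne S)) (ha : a ∈ HClass x) (hb : b ∈ HClass y) :
    a * b ∈ HClass (x * y) := by
  rw [mem_HClass_iff] at *
  obtain ⟨⟨⟨s, hs⟩, ⟨t, ht⟩⟩, ⟨s', hs'⟩, ⟨t', ht'⟩⟩ := ha
  obtain ⟨⟨⟨u, hu⟩, ⟨v, hv⟩⟩, ⟨u', hu'⟩, ⟨v', hv'⟩⟩ := hb
  simp only [WithOne.coe_mul]
  refine ⟨⟨⟨s * u, ?_⟩, ⟨v * t, ?_⟩⟩, ⟨s' * u', ?_⟩, ⟨v' * t', ?_⟩⟩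
  · rw [hs, hu, (hy.comm s).symm.mul_mul_mul_comm]
  · rw [ht, (hy.comm t).symm.right_comm, hv]
    simp only [mul_assoc]
  · rw [hs', hu', (hx.comm u').mul_mul_mul_comm]
  · rw [hv', (hx.comm v').left_comm, ht']
    simp only [mul_assoc]

end Semigroup

theorem statement8 {S : Type*} [Semigroup S]
    (hper : IsPeriodicSemigroup S)
    (hc : ∀ e : S, IsIdempotentElem e → e ∈ centerSet S) :
    (∀ x : S, ∃! y : S, (∃ n : ℕ, y = spow x n) ∧ IsIdempotentElem y) ∧
    (∀ π : S → S,
      (∀ x : S, (∃ n : ℕ, π x = spow x n) ∧ IsIdempotentElem (π x)) →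
      ∀ x y : S, π (x * y) = π x * π y) ∧
    (∀ x y : S, IsIdempotentElem x → IsIdempotentElem y →
      ∀ a ∈ HClass x, ∀ b ∈ HClass y, a * b ∈ HClass (x * y)) ∧
    (∀ a ∈ CliffordPart S, ∀ b ∈ CliffordPart S, a * b ∈ CliffordPart S) := by
  have hH : ∀ x y : S, IsIdempotentElem x → IsIdempotentElem y →
      ∀ a ∈ HClass x, ∀ b ∈ HClass y, a * b ∈ HClass (x * y) :=
    fun x y hx hy a ha b hb => mul_mem_HClass_mul (WithOne.isMulCentral_coe (hc x hx))
      (WithOne.isMulCentral_coe (hc y hy)) ha hb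
  refine ⟨fun x => ?_, fun π hπ x y => ?_, hH, ?_⟩
  · obtain ⟨n, hn⟩ := hper x
    refine ⟨spow x n, ⟨⟨n, rfl⟩, hn⟩, ?_⟩
    rintro _ ⟨⟨m, rfl⟩, hm⟩
    exact spow_eq_spow_of_isIdempotentElem hm hn
  · obtain ⟨⟨m, hm⟩, he⟩ := hπ x
    obtain ⟨⟨n, hn⟩, hf⟩ := hπ y
    obtain ⟨⟨k, hk⟩, hg⟩ := hπ (x * y)
    exact eq_mul_of_spow_eq (hc _ he) (hc _ hf) (hc _ hg) he hf hg hm.symm hn.symm hk.symm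
  · rintro a ⟨e, he, ha⟩ b ⟨f, hf, hb⟩
    exact ⟨e * f, he.mul_of_commute (hc e he f) hf, hH e f he hf a ha b hb⟩
end

section
/- Let S be an almost Clifford semigroup, i.e., the complement S \ H(S) of the Clifford part is finite. Then for every infinite subset A ⊆ S the set AA = {xy : x,y ∈ A} is infinite. -/
/-!
If `AA` were finite for an infinite `A`, then so would be `BB` for the infinite set
`B = A ∩ H(S)`. Squaring maps `B` into `BB`, so some fibre `{x ∈ B | x² = c}` is infinite.
Elements of `H(S)` with equal squares lie in a common maximal subgroup `H_a`, where left
multiplication by `a` is injective; hence `a` times that fibre is an infinite subset of `BB`.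
-/

open Set

theorem setOf_eq_setOf_iff_of_refl_of_trans {α : Type*} {r : α → α → Prop}
    (refl : ∀ x, r x x) (trans : ∀ {x y z}, r x y → r y z → r x z) {x a : α} :
    {y | r x y} = {y | r a y} ↔ r a x ∧ r x a := by
  constructor
  · intro h
    have hx : x ∈ {y | r a y} := h ▸ refl x
    have ha : a ∈ {y | r x y} := h ▸ refl a
    exact ⟨hx, ha⟩
  · rintro ⟨hax, hxa⟩
    ext y
    exact ⟨trans hax, trans hxa⟩

section HClass

variable {S : Type*} [Semigroup S]

theorem mem_hClass_iff {x a : S} :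
    x ∈ HClass a ↔
      ((∃ s : WithOne S, (x : WithOne S) = a * s) ∧ ∃ s : WithOne S, (a : WithOne S) = x * s) ∧
      ((∃ s : WithOne S, (x : WithOne S) = s * a) ∧ ∃ s : WithOne S, (a : WithOne S) = s * x) :=
  and_congr
    (setOf_eq_setOf_iff_of_refl_of_trans (r := fun x y : WithOne S => ∃ s, y = x * s)
      (fun y => ⟨1, (mul_one y).symm⟩)
      (fun ⟨s, hs⟩ ⟨t, ht⟩ => ⟨s * t, by rw [ht, hs, mul_assoc]⟩))
    (setOf_eq_setOf_iff_of_refl_of_trans (r := fun x y : WithOne S => ∃ s, y = s * x)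
      (fun y => ⟨1, (one_mul y).symm⟩)
      (fun ⟨s, hs⟩ ⟨t, ht⟩ => ⟨t * s, by rw [ht, hs, mul_assoc]⟩))

theorem mem_hClass_comm {x a : S} : x ∈ HClass a ↔ a ∈ HClass x :=
  ⟨fun h => ⟨h.1.symm, h.2.symm⟩, fun h => ⟨h.1.symm, h.2.symm⟩⟩

theorem mem_hClass_trans {x y a : S} (hxy : x ∈ HClass y) (hya : y ∈ HClass a) :
    x ∈ HClass a :=
  ⟨hxy.1.trans hya.1, hxy.2.trans hya.2⟩

theorem IsIdempotentElem.mul_eq_of_mem_hClass {e x : S} (he : IsIdempotentElem e)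
    (hx : x ∈ HClass e) : e * x = x := by
  obtain ⟨⟨⟨s, hs⟩, -⟩, -⟩ := mem_hClass_iff.mp hx
  apply WithOne.coe_injective
  rw [WithOne.coe_mul, hs, ← mul_assoc, ← WithOne.coe_mul, he]

theorem IsIdempotentElem.mul_eq_of_mem_hClass' {e x : S} (he : IsIdempotentElem e)
    (hx : x ∈ HClass e) : x * e = x := by
  obtain ⟨-, ⟨s, hs⟩, -⟩ := mem_hClass_iff.mp hx
  apply WithOne.coe_injective
  rw [WithOne.coe_mul, hs, mul_assoc, ← WithOne.coe_mul, he]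

theorem mul_self_mem_hClass {e x : S} (he : IsIdempotentElem e) (hx : x ∈ HClass e) :
    x * x ∈ HClass e := by
  refine mem_hClass_trans (mem_hClass_iff.mpr ?_) hx
  obtain ⟨⟨-, t, ht⟩, -, u, hu⟩ := mem_hClass_iff.mp hx
  refine ⟨⟨⟨x, WithOne.coe_mul x x⟩, t, ?_⟩, ⟨x, WithOne.coe_mul x x⟩, u, ?_⟩
  · conv_lhs => rw [← he.mul_eq_of_mem_hClass' hx, WithOne.coe_mul, ht]
    rw [WithOne.coe_mul, mul_assoc]
  · conv_lhs => rw [← he.mul_eq_of_mem_hClass hx, WithOne.coe_mul, hu]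
    rw [WithOne.coe_mul, mul_assoc]

theorem mem_hClass_of_mul_self_eq {x y : S} (hx : x ∈ CliffordPart S)
    (hy : y ∈ CliffordPart S) (h : x * x = y * y) : y ∈ HClass x := by
  obtain ⟨e, he, hxe⟩ := hx
  obtain ⟨f, hf, hyf⟩ := hy
  have hy_sq : y ∈ HClass (y * y) :=
    mem_hClass_trans hyf (mem_hClass_comm.mp (mul_self_mem_hClass hf hyf))
  have hx_sq : x * x ∈ HClass x :=
    mem_hClass_trans (mul_self_mem_hClass he hxe) (mem_hClass_comm.mp hxe)
  exact mem_hClass_trans hy_sq (h ▸ hx_sq)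

theorem mul_left_injOn_hClass {a : S} (ha : a ∈ CliffordPart S) :
    InjOn (a * ·) (HClass a) := by
  obtain ⟨e, he, hae⟩ := ha
  obtain ⟨-, -, u, hu⟩ := mem_hClass_iff.mp hae
  intro y hy z hz hyz
  have hyz' : (a : WithOne S) * y = a * z := by
    rw [← WithOne.coe_mul, ← WithOne.coe_mul]
    exact congrArg _ hyz
  rw [← he.mul_eq_of_mem_hClass (mem_hClass_trans hy hae),
    ← he.mul_eq_of_mem_hClass (mem_hClass_trans hz hae)]
  apply WithOne.coe_injective
  rw [WithOne.coe_mul, WithOne.coe_mul, hu, mul_assoc, mul_assoc, hyz']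

theorem Set.Finite.setOf_mul_self_eq {B : Set S} (hB : B ⊆ CliffordPart S)
    (hfin : (image2 (· * ·) B B).Finite) (c : S) : {x ∈ B | x * x = c}.Finite := by
  rcases eq_empty_or_nonempty {x ∈ B | x * x = c} with hempty | ⟨a, haB, rfl⟩
  · exact hempty ▸ finite_empty
  have hfibre : {x ∈ B | x * x = a * a} ⊆ HClass a := fun x ⟨hxB, hx⟩ =>
    mem_hClass_of_mul_self_eq (hB haB) (hB hxB) hx.symm
  refine Finite.of_finite_image (hfin.subset ?_) ((mul_left_injOn_hClass (hB haB)).mono hfibre)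
  rintro _ ⟨x, ⟨hxB, -⟩, rfl⟩
  exact mem_image2_of_mem haB hxB

theorem Set.Infinite.image2_mul_of_subset_cliffordPart {B : Set S} (hB : B ⊆ CliffordPart S)
    (hinf : B.Infinite) : (image2 (· * ·) B B).Infinite := by
  intro hfin
  refine hinf ((hfin.biUnion fun c _ => hfin.setOf_mul_self_eq hB c).subset ?_)
  intro x hx
  exact mem_biUnion (mem_image2_of_mem hx hx) ⟨hx, rfl⟩

end HClass

theorem statement19 {S : Type*} [Semigroup S]
    (hac : (Set.univ \ CliffordPart S).Finite) :
    ∀ A : Set S, A.Infinite → (Set.image2 (· * ·) A A).Infinite := by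
  intro A hA
  have hAH : (A ∩ CliffordPart S).Infinite :=
    (hA.sdiff hac).mono fun x hx => ⟨hx.1, not_not.mp fun h => hx.2 ⟨trivial, h⟩⟩
  exact (hAH.image2_mul_of_subset_cliffordPart inter_subset_right).mono
    (image2_subset inter_subset_left inter_subset_left)
end
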